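/- Assume the nondegeneracy condition: every smooth vector field v^μ on ℝ^D satisfying G_{μν} v^ν = 0, Γ_{μν,ρ} v^ρ = 0, and H_{μνρ} v^ρ = 0 identically must vanish identically. If ζ^μ and ξ^μ are smooth vector fields with D⁺_μ ζ_ν = 0 and D⁻_μ ξ_ν = 0 for all μ,ν, then their Lie bracket vanishes: ζ^ν ∂_ν ξ^μ − ξ^ν ∂_ν ζ^μ = 0 for all μ. -/

import Mathlib

noncomputable section

/-- Partial derivative of `f` at `x` in the `μ`-th coordinate direction. -/
def pd {D : ℕ} (μ : Fin D) (f : (Fin D → ℝ) → ℝ) (x : Fin D → ℝ) : ℝ :=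
  fderiv ℝ f x (Pi.single μ 1)

/-- A smooth real-valued function. -/
def Sm {D : ℕ} (f : (Fin D → ℝ) → ℝ) : Prop := ContDiff ℝ (⊤ : ℕ∞) f

/-- A smooth vector field on `ℝ^D`. -/
def SmoothVF {D : ℕ} (V : (Fin D → ℝ) → Fin D → ℝ) : Prop := ∀ μ, Sm fun x => V x μ

/-- A smooth field of 2-tensors on `ℝ^D`. -/
def Smooth2T {D : ℕ} (T : (Fin D → ℝ) → Fin D → Fin D → ℝ) : Prop :=
  ∀ μ ν, Sm fun x => T x μ ν

/-- The connection coefficients `Γ_{μν,ρ} = ½(∂_μG_{νρ} + ∂_νG_{μρ} − ∂_ρG_{μν})`. -/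
def Gam {D : ℕ} (G : (Fin D → ℝ) → Fin D → Fin D → ℝ) (μ ν ρ : Fin D) (x : Fin D → ℝ) : ℝ :=
  (pd μ (fun y => G y ν ρ) x + pd ν (fun y => G y μ ρ) x - pd ρ (fun y => G y μ ν) x) / 2

/-- The torsion `H_{μνρ} = ∂_μB_{νρ} + ∂_νB_{ρμ} + ∂_ρB_{μν}`. -/
def Htor {D : ℕ} (B : (Fin D → ℝ) → Fin D → Fin D → ℝ) (μ ν ρ : Fin D) (x : Fin D → ℝ) : ℝ :=
  pd μ (fun y => B y ν ρ) x + pd ν (fun y => B y ρ μ) x + pd ρ (fun y => B y μ ν) x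

/-- `Γ⁺_{μν,ρ} = Γ_{μν,ρ} + ½H_{μνρ}`. -/
def GamP {D : ℕ} (G B : (Fin D → ℝ) → Fin D → Fin D → ℝ) (μ ν ρ : Fin D) (x : Fin D → ℝ) : ℝ :=
  Gam G μ ν ρ x + Htor B μ ν ρ x / 2

/-- `Γ⁻_{μν,ρ} = Γ_{μν,ρ} − ½H_{μνρ}`. -/
def GamM {D : ℕ} (G B : (Fin D → ℝ) → Fin D → Fin D → ℝ) (μ ν ρ : Fin D) (x : Fin D → ℝ) : ℝ :=
  Gam G μ ν ρ x - Htor B μ ν ρ x / 2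

/-- The lowered components `V_μ = G_{μν}V^ν` of a vector field. -/
def lowerV {D : ℕ} (G : (Fin D → ℝ) → Fin D → Fin D → ℝ)
    (V : (Fin D → ℝ) → Fin D → ℝ) (μ : Fin D) (x : Fin D → ℝ) : ℝ :=
  ∑ ν, G x μ ν * V x ν

/-- The covariant derivative `D⁺_μV_ν = G_{νρ}∂_μV^ρ + Γ⁺_{μρ,ν}V^ρ`. -/
def Dp {D : ℕ} (G B : (Fin D → ℝ) → Fin D → Fin D → ℝ)
    (V : (Fin D → ℝ) → Fin D → ℝ) (μ ν : Fin D) (x : Fin D → ℝ) : ℝ :=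
  (∑ ρ, G x ν ρ * pd μ (fun y => V y ρ) x) + ∑ ρ, GamP G B μ ρ ν x * V x ρ

/-- The covariant derivative `D⁻_μV_ν = G_{νρ}∂_μV^ρ + Γ⁻_{μρ,ν}V^ρ`. -/
def Dm {D : ℕ} (G B : (Fin D → ℝ) → Fin D → Fin D → ℝ)
    (V : (Fin D → ℝ) → Fin D → ℝ) (μ ν : Fin D) (x : Fin D → ℝ) : ℝ :=
  (∑ ρ, G x ν ρ * pd μ (fun y => V y ρ) x) + ∑ ρ, GamM G B μ ρ ν x * V x ρ

/-- The Lie derivative of the metric: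
`(ℒ_ζG)_{μν} = ζ^ρ∂_ρG_{μν} + ∂_μζ^ρ·G_{ρν} + ∂_νζ^ρ·G_{μρ}`. -/
def lieG {D : ℕ} (G : (Fin D → ℝ) → Fin D → Fin D → ℝ)
    (ζ : (Fin D → ℝ) → Fin D → ℝ) (μ ν : Fin D) (x : Fin D → ℝ) : ℝ :=
  (∑ ρ, ζ x ρ * pd ρ (fun y => G y μ ν) x)
    + (∑ ρ, pd μ (fun y => ζ y ρ) x * G x ρ ν)
    + ∑ ρ, pd ν (fun y => ζ y ρ) x * G x μ ρ

/-- A Killing pair `(ζ, b)`: `D⁻_μζ_ν + D⁺_νζ_μ + ∂_μb_ν − ∂_νb_μ = 0`. -/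
def IsKillingPair {D : ℕ} (G B : (Fin D → ℝ) → Fin D → Fin D → ℝ)
    (ζ b : (Fin D → ℝ) → Fin D → ℝ) : Prop :=
  ∀ (μ ν : Fin D) (x : Fin D → ℝ),
    Dm G B ζ μ ν x + Dp G B ζ ν μ x
      + pd μ (fun y => b y ν) x - pd ν (fun y => b y μ) x = 0

/-!
Write `v = [ζ, ξ]`. The equations `D⁺ζ = 0` and `D⁻ξ = 0` express `G_{μρ}∂_τζ^ρ` and
`G_{μρ}∂_τξ^ρ` through `Γ^±`, and since `Γ⁺_{μν,ρ} = Γ⁻_{νμ,ρ}` this makes `G_{μρ}v^ρ` vanish.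
As `G` may be degenerate, we also need `Γ⁺_{μν,ρ}v^ρ = 0`; symmetrising and antisymmetrising in
`μν` then gives `Γ_{μν,ρ}v^ρ = 0` and `H_{μνρ}v^ρ = 0`. Differentiating `D^±V = 0` shows that a
parallel field is annihilated by the curvature of its connection. Contracting this with the other
field, `Γ⁺_{μν,ρ}v^ρ` splits into `G`-terms, which cancel because `G` is symmetric, and curvature
terms, which cancel by the pair exchange `R⁻_{τνρμ} = R⁺_{ρμτν}` coming from `dH = 0`.
-/

open Finset

theorem sum_mul_sum_comm {ι κ : Type*} [Fintype ι] [Fintype κ] (f : ι → ℝ) (g : κ → ℝ)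
    (h : κ → ι → ℝ) : ∑ i, f i * ∑ k, g k * h k i = ∑ k, g k * ∑ i, f i * h k i := by
  simp only [mul_sum]
  rw [sum_comm]
  exact sum_congr rfl fun _ _ => sum_congr rfl fun _ _ => by ring

theorem sum_mul_sum_of_symm {ι : Type*} [Fintype ι] {g : ι → ι → ℝ} (hg : ∀ i j, g i j = g j i)
    (u v : ι → ℝ) : ∑ i, u i * ∑ j, g i j * v j = ∑ i, v i * ∑ j, g i j * u j := by
  simp only [mul_sum]
  rw [sum_comm]
  exact sum_congr rfl fun _ _ => sum_congr rfl fun _ _ => by rw [hg]; ring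

section PartialDerivative

variable {D : ℕ} {f g : (Fin D → ℝ) → ℝ} {x : Fin D → ℝ}

theorem Sm.differentiableAt (hf : Sm f) : DifferentiableAt ℝ f x :=
  (hf.differentiable (by simp)).differentiableAt

theorem Sm.pd (hf : Sm f) (μ : Fin D) : Sm (pd μ f) :=
  (hf.fderiv_right (by exact_mod_cast le_top)).clm_apply contDiff_const

theorem pd_congr (h : ∀ y, f y = g y) (μ : Fin D) (x : Fin D → ℝ) : pd μ f x = pd μ g x := by
  rw [funext h]

theorem pd_of_forall_eq_zero (h : ∀ y, f y = 0) (μ : Fin D) (x : Fin D → ℝ) : pd μ f x = 0 := by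
  simp [pd, funext h]

theorem pd_neg (μ : Fin D) : pd μ (fun y => -f y) x = -pd μ f x := by
  simp [pd, fderiv_fun_neg]

theorem pd_add (hf : DifferentiableAt ℝ f x) (hg : DifferentiableAt ℝ g x) (μ : Fin D) :
    pd μ (fun y => f y + g y) x = pd μ f x + pd μ g x := by
  simp [pd, fderiv_fun_add hf hg]

theorem pd_sub (hf : DifferentiableAt ℝ f x) (hg : DifferentiableAt ℝ g x) (μ : Fin D) :
    pd μ (fun y => f y - g y) x = pd μ f x - pd μ g x := by
  simp [pd, fderiv_fun_sub hf hg]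

theorem pd_div_const (hf : DifferentiableAt ℝ f x) (c : ℝ) (μ : Fin D) :
    pd μ (fun y => f y / c) x = pd μ f x / c := by
  simp [pd, div_eq_mul_inv, fderiv_mul_const hf, mul_comm]

theorem pd_mul (hf : DifferentiableAt ℝ f x) (hg : DifferentiableAt ℝ g x) (μ : Fin D) :
    pd μ (fun y => f y * g y) x = pd μ f x * g x + f x * pd μ g x := by
  simp [pd, fderiv_fun_mul hf hg]
  ring

theorem pd_sum {ι : Type*} (s : Finset ι) {F : ι → (Fin D → ℝ) → ℝ}
    (hF : ∀ i ∈ s, DifferentiableAt ℝ (F i) x) (μ : Fin D) :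
    pd μ (fun y => ∑ i ∈ s, F i y) x = ∑ i ∈ s, pd μ (F i) x := by
  simp [pd, fderiv_fun_sum hF]

theorem pd_pd_comm (hf : Sm f) (μ ν : Fin D) (x : Fin D → ℝ) :
    pd μ (pd ν f) x = pd ν (pd μ f) x := by
  have hf' : ContDiff ℝ (⊤ : ℕ∞) (fderiv ℝ f) := hf.fderiv_right (by exact_mod_cast le_top)
  have hsymm := second_derivative_symmetric (fun y => hf.differentiableAt.hasFDerivAt)
    (hf'.differentiable (by simp)).differentiableAt.hasFDerivAt (x := x)
  have hpd : ∀ a b, pd a (pd b f) x = fderiv ℝ (fderiv ℝ f) x (Pi.single a 1) (Pi.single b 1) := by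
    intro a b
    rw [pd, show pd b f = fun y => fderiv ℝ f y (Pi.single b 1) from rfl,
      fderiv_clm_apply (hf'.differentiable (by simp)).differentiableAt (differentiableAt_const _)]
    simp
  rw [hpd, hpd, hsymm]

end PartialDerivative

section Connection

variable {D : ℕ} {G B : (Fin D → ℝ) → Fin D → Fin D → ℝ}

theorem Smooth2T.sm_gam (hG : Smooth2T G) (μ ν ρ : Fin D) : Sm (Gam G μ ν ρ) :=
  ((((hG ν ρ).pd μ).add ((hG μ ρ).pd ν)).sub ((hG μ ν).pd ρ)).div_const 2

theorem Smooth2T.sm_htor (hB : Smooth2T B) (μ ν ρ : Fin D) : Sm (Htor B μ ν ρ) :=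
  (((hB ν ρ).pd μ).add ((hB ρ μ).pd ν)).add ((hB μ ν).pd ρ)

theorem sm_gamP (hG : Smooth2T G) (hB : Smooth2T B) (μ ν ρ : Fin D) : Sm (GamP G B μ ν ρ) :=
  (hG.sm_gam μ ν ρ).add ((hB.sm_htor μ ν ρ).div_const (2 : ℝ))

theorem sm_gamM (hG : Smooth2T G) (hB : Smooth2T B) (μ ν ρ : Fin D) : Sm (GamM G B μ ν ρ) :=
  (hG.sm_gam μ ν ρ).sub ((hB.sm_htor μ ν ρ).div_const (2 : ℝ))

theorem pd_of_antisymm {T : (Fin D → ℝ) → Fin D → Fin D → ℝ} (hT : ∀ x μ ν, T x μ ν = -T x ν μ)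
    (σ μ ν : Fin D) (x : Fin D → ℝ) : pd σ (fun y => T y μ ν) x = -pd σ (fun y => T y ν μ) x :=
  (pd_congr (fun y => hT y μ ν) σ x).trans (pd_neg σ)

section Symmetries

variable (hGsym : ∀ x μ ν, G x μ ν = G x ν μ) (hBanti : ∀ x μ ν, B x μ ν = -B x ν μ)
include hGsym hBanti

theorem gamP_eq_gamM (μ ν ρ : Fin D) (x : Fin D → ℝ) : GamP G B μ ν ρ x = GamM G B ν μ ρ x := by
  have hG := pd_congr (fun y => hGsym y μ ν) ρ x
  have hB := fun σ a b => pd_of_antisymm hBanti σ a b x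
  simp only [GamP, GamM, Gam, Htor]
  linear_combination (1 / 2 : ℝ) * (-hG + hB μ ν ρ + hB ν ρ μ + hB ρ μ ν)

theorem gamP_add_gamP (μ ν ρ : Fin D) (x : Fin D → ℝ) :
    GamP G B μ ν ρ x + GamP G B μ ρ ν x = pd μ (fun y => G y ν ρ) x := by
  have hG := pd_congr (fun y => hGsym y ρ ν) μ x
  have hB := fun σ a b => pd_of_antisymm hBanti σ a b x
  simp only [GamP, Gam, Htor]
  linear_combination (1 / 2 : ℝ) * (hG + hB μ ν ρ + hB ν ρ μ + hB ρ μ ν)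

theorem gamM_add_gamM (μ ν ρ : Fin D) (x : Fin D → ℝ) :
    GamM G B μ ν ρ x + GamM G B μ ρ ν x = pd μ (fun y => G y ν ρ) x := by
  have hG := pd_congr (fun y => hGsym y ρ ν) μ x
  have hB := fun σ a b => pd_of_antisymm hBanti σ a b x
  simp only [GamM, Gam, Htor]
  linear_combination (1 / 2 : ℝ) * (hG - hB μ ν ρ - hB ν ρ μ - hB ρ μ ν)

theorem gam_eq_gamP (μ ν ρ : Fin D) (x : Fin D → ℝ) :
    Gam G μ ν ρ x = (GamP G B μ ν ρ x + GamP G B ν μ ρ x) / 2 := by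
  rw [gamP_eq_gamM hGsym hBanti ν, GamP, GamM]
  ring

theorem htor_eq_gamP (μ ν ρ : Fin D) (x : Fin D → ℝ) :
    Htor B μ ν ρ x = GamP G B μ ν ρ x - GamP G B ν μ ρ x := by
  rw [gamP_eq_gamM hGsym hBanti ν, GamP, GamM]
  ring

end Symmetries

end Connection

section CovariantDerivative

variable {D : ℕ} {G : (Fin D → ℝ) → Fin D → Fin D → ℝ}
  {Γ' : Fin D → Fin D → Fin D → (Fin D → ℝ) → ℝ} {V : (Fin D → ℝ) → Fin D → ℝ}

/-- `Dp G B = covD G (GamP G B)` and `Dm G B = covD G (GamM G B)` definitionally. -/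
def covD (G : (Fin D → ℝ) → Fin D → Fin D → ℝ) (Γ' : Fin D → Fin D → Fin D → (Fin D → ℝ) → ℝ)
    (V : (Fin D → ℝ) → Fin D → ℝ) (μ ν : Fin D) (x : Fin D → ℝ) : ℝ :=
  (∑ ρ, G x ν ρ * pd μ (fun y => V y ρ) x) + ∑ ρ, Γ' μ ρ ν x * V x ρ

/-- The part of the curvature `R_{τνρμ}` of `Γ'` that is linear in `Γ'`. -/
def linCurv (Γ' : Fin D → Fin D → Fin D → (Fin D → ℝ) → ℝ) (τ ν ρ μ : Fin D) (x : Fin D → ℝ) :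
    ℝ :=
  pd τ (Γ' ν ρ μ) x - pd ν (Γ' τ ρ μ) x

theorem sum_G_mul_pd_eq_of_covD_eq_zero (hDV : ∀ μ ν x, covD G Γ' V μ ν x = 0)
    (μ ν : Fin D) (x : Fin D → ℝ) :
    ∑ ρ, G x ν ρ * pd μ (fun y => V y ρ) x = -∑ ρ, Γ' μ ρ ν x * V x ρ :=
  eq_neg_of_add_eq_zero_left (hDV μ ν x)

theorem pd_covD (hG : Smooth2T G) (hΓ : ∀ μ ν ρ, Sm (Γ' μ ν ρ)) (hV : SmoothVF V)
    (σ μ ν : Fin D) (x : Fin D → ℝ) :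
    pd σ (covD G Γ' V μ ν) x = ∑ ρ, (pd σ (fun y => G y ν ρ) x * pd μ (fun y => V y ρ) x
      + G x ν ρ * pd σ (pd μ fun y => V y ρ) x
      + pd σ (Γ' μ ρ ν) x * V x ρ + Γ' μ ρ ν x * pd σ (fun y => V y ρ) x) := by
  have dG := fun ρ => (hG ν ρ).differentiableAt.fun_mul ((hV ρ).pd μ).differentiableAt (x := x)
  have dΓ := fun ρ => (hΓ μ ρ ν).differentiableAt.fun_mul (hV ρ).differentiableAt (x := x)
  unfold covD
  rw [pd_add (DifferentiableAt.fun_sum fun ρ _ => dG ρ) (DifferentiableAt.fun_sum fun ρ _ => dΓ ρ),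
    pd_sum _ fun ρ _ => dG ρ, pd_sum _ fun ρ _ => dΓ ρ, ← sum_add_distrib]
  refine sum_congr rfl fun ρ _ => ?_
  rw [pd_mul (hG ν ρ).differentiableAt ((hV ρ).pd μ).differentiableAt,
    pd_mul (hΓ μ ρ ν).differentiableAt (hV ρ).differentiableAt]
  ring

/-- `R(∂_τ, ∂_ν)V = 0` for a parallel field `V`, with the quadratic part of the curvature kept
on the left since `G` cannot be inverted. -/
theorem sum_conn_mul_pd_eq_of_covD_eq_zero (hG : Smooth2T G) (hΓ : ∀ μ ν ρ, Sm (Γ' μ ν ρ))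
    (hV : SmoothVF V) (hcompat : ∀ μ ν ρ x, Γ' μ ν ρ x + Γ' μ ρ ν x = pd μ (fun y => G y ν ρ) x)
    (hDV : ∀ μ ν x, covD G Γ' V μ ν x = 0) (τ ν μ : Fin D) (x : Fin D → ℝ) :
    ∑ ρ, Γ' ν μ ρ x * pd τ (fun y => V y ρ) x
      = ∑ ρ, Γ' τ μ ρ x * pd ν (fun y => V y ρ) x + ∑ ρ, linCurv Γ' τ ν ρ μ x * V x ρ := by
  rw [← sub_eq_iff_eq_add', ← sub_eq_zero, ← sum_sub_distrib, ← sum_sub_distrib]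
  calc _ = pd ν (covD G Γ' V τ μ) x - pd τ (covD G Γ' V ν μ) x := by
        rw [pd_covD hG hΓ hV, pd_covD hG hΓ hV, ← sum_sub_distrib]
        refine sum_congr rfl fun ρ _ => ?_
        rw [linCurv]
        linear_combination pd τ (fun y => V y ρ) x * hcompat ν μ ρ x
          - pd ν (fun y => V y ρ) x * hcompat τ μ ρ x - G x μ ρ * pd_pd_comm (hV ρ) ν τ x
    _ = 0 := by
        rw [pd_of_forall_eq_zero (hDV τ μ), pd_of_forall_eq_zero (hDV ν μ), sub_self]

theorem sum_conn_mul_sum_pd_eq_of_covD_eq_zero (hG : Smooth2T G) (hΓ : ∀ μ ν ρ, Sm (Γ' μ ν ρ))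
    (hV : SmoothVF V) (hcompat : ∀ μ ν ρ x, Γ' μ ν ρ x + Γ' μ ρ ν x = pd μ (fun y => G y ν ρ) x)
    (hDV : ∀ μ ν x, covD G Γ' V μ ν x = 0) (u : Fin D → ℝ) (ν μ : Fin D) (x : Fin D → ℝ) :
    ∑ ρ, Γ' ν μ ρ x * ∑ τ, u τ * pd τ (fun y => V y ρ) x
      = ∑ ρ, pd ν (fun y => V y ρ) x * ∑ τ, u τ * Γ' τ μ ρ x
        + ∑ τ, u τ * ∑ ρ, linCurv Γ' τ ν ρ μ x * V x ρ := by
  rw [sum_mul_sum_comm (fun ρ => Γ' ν μ ρ x), sum_mul_sum_comm (fun ρ => pd ν (fun y => V y ρ) x),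
    ← sum_add_distrib]
  refine sum_congr rfl fun τ _ => ?_
  rw [sum_conn_mul_pd_eq_of_covD_eq_zero hG hΓ hV hcompat hDV τ ν μ x, mul_add]
  congr 2
  exact sum_congr rfl fun _ _ => mul_comm _ _

end CovariantDerivative

section Curvature

variable {D : ℕ} {G B : (Fin D → ℝ) → Fin D → Fin D → ℝ}

theorem pd_gam (hG : Smooth2T G) (σ α β γ : Fin D) (x : Fin D → ℝ) :
    pd σ (Gam G α β γ) x = (pd σ (pd α fun y => G y β γ) x + pd σ (pd β fun y => G y α γ) x
      - pd σ (pd γ fun y => G y α β) x) / 2 := by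
  have d := fun μ a b => ((hG a b).pd μ).differentiableAt (x := x)
  change pd σ (fun y => (pd α (fun y => G y β γ) y + pd β (fun y => G y α γ) y
    - pd γ (fun y => G y α β) y) / 2) x = _
  rw [pd_div_const (((d _ _ _).fun_add (d _ _ _)).fun_sub (d _ _ _)),
    pd_sub ((d _ _ _).fun_add (d _ _ _)) (d _ _ _), pd_add (d _ _ _) (d _ _ _)]

theorem pd_htor (hB : Smooth2T B) (σ α β γ : Fin D) (x : Fin D → ℝ) :
    pd σ (Htor B α β γ) x = pd σ (pd α fun y => B y β γ) x + pd σ (pd β fun y => B y γ α) x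
      + pd σ (pd γ fun y => B y α β) x := by
  have d := fun μ a b => ((hB a b).pd μ).differentiableAt (x := x)
  change pd σ (fun y => pd α (fun y => B y β γ) y + pd β (fun y => B y γ α) y
    + pd γ (fun y => B y α β) y) x = _
  rw [pd_add ((d _ _ _).fun_add (d _ _ _)) (d _ _ _), pd_add (d _ _ _) (d _ _ _)]

theorem pd_gamP (hG : Smooth2T G) (hB : Smooth2T B) (σ α β γ : Fin D) (x : Fin D → ℝ) :
    pd σ (GamP G B α β γ) x = pd σ (Gam G α β γ) x + pd σ (Htor B α β γ) x / 2 := by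
  have hH := hB.sm_htor α β γ
  rw [← pd_div_const hH.differentiableAt,
    ← pd_add (hG.sm_gam α β γ).differentiableAt (Sm.differentiableAt (hH.div_const 2))]
  rfl

theorem pd_gamM (hG : Smooth2T G) (hB : Smooth2T B) (σ α β γ : Fin D) (x : Fin D → ℝ) :
    pd σ (GamM G B α β γ) x = pd σ (Gam G α β γ) x - pd σ (Htor B α β γ) x / 2 := by
  have hH := hB.sm_htor α β γ
  rw [← pd_div_const hH.differentiableAt,
    ← pd_sub (hG.sm_gam α β γ).differentiableAt (Sm.differentiableAt (hH.div_const 2))]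
  rfl

theorem linCurv_gam_pair_symm (hG : Smooth2T G) (hGsym : ∀ x μ ν, G x μ ν = G x ν μ)
    (τ ν ρ μ : Fin D) (x : Fin D → ℝ) :
    linCurv (Gam G) τ ν ρ μ x = linCurv (Gam G) ρ μ τ ν x := by
  have comm := fun a b c d => pd_pd_comm (hG c d) a b x
  have swap : ∀ a b c d, pd a (pd b fun y => G y c d) x = pd b (pd a fun y => G y d c) x :=
    fun a b c d =>
      (comm a b c d).trans (pd_congr (fun y => pd_congr (fun z => hGsym z c d) a y) b x)
  simp only [linCurv, pd_gam hG]
  linear_combination (1 / 2 : ℝ) * (swap τ ρ ν μ - swap τ μ ν ρ - swap ν ρ τ μ + swap ν μ τ ρ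
    + comm τ ν ρ μ - comm ρ μ τ ν)

-- `dH = 0`.
theorem linCurv_htor_add_linCurv_htor (hB : Smooth2T B) (hBanti : ∀ x μ ν, B x μ ν = -B x ν μ)
    (τ ν ρ μ : Fin D) (x : Fin D → ℝ) :
    linCurv (Htor B) τ ν ρ μ x + linCurv (Htor B) ρ μ τ ν x = 0 := by
  have comm := fun a b c d => pd_pd_comm (hB c d) a b x
  have swap : ∀ a b c d, pd a (pd b fun y => B y c d) x = -pd b (pd a fun y => B y d c) x :=
    fun a b c d => (comm a b c d).trans
      ((pd_congr (fun y => pd_of_antisymm hBanti a c d y) b x).trans (pd_neg b))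
  simp only [linCurv, pd_htor hB]
  linear_combination comm τ ν ρ μ + swap τ ρ μ ν + comm τ μ ν ρ - comm ν ρ μ τ - swap ν μ τ ρ
    + comm ρ μ τ ν

theorem linCurv_gamM_eq_linCurv_gamP (hG : Smooth2T G) (hGsym : ∀ x μ ν, G x μ ν = G x ν μ)
    (hB : Smooth2T B) (hBanti : ∀ x μ ν, B x μ ν = -B x ν μ) (τ ν ρ μ : Fin D) (x : Fin D → ℝ) :
    linCurv (GamM G B) τ ν ρ μ x = linCurv (GamP G B) ρ μ τ ν x := by
  have hGam := linCurv_gam_pair_symm hG hGsym τ ν ρ μ x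
  have hH := linCurv_htor_add_linCurv_htor hB hBanti τ ν ρ μ x
  simp only [linCurv, pd_gamP hG hB, pd_gamM hG hB] at hGam hH ⊢
  linear_combination hGam - hH / 2

end Curvature

section LieBracket

variable {D : ℕ} {G : (Fin D → ℝ) → Fin D → Fin D → ℝ}
  {P M : Fin D → Fin D → Fin D → (Fin D → ℝ) → ℝ} {ζ ξ : (Fin D → ℝ) → Fin D → ℝ}

def lieBracket (ζ ξ : (Fin D → ℝ) → Fin D → ℝ) (x : Fin D → ℝ) (μ : Fin D) : ℝ :=
  (∑ ν, ζ x ν * pd ν (fun y => ξ y μ) x) - ∑ ν, ξ x ν * pd ν (fun y => ζ y μ) x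

theorem SmoothVF.lieBracket (hζ : SmoothVF ζ) (hξ : SmoothVF ξ) : SmoothVF (lieBracket ζ ξ) :=
  fun μ => (ContDiff.sum fun ν _ => (hζ ν).mul ((hξ μ).pd ν)).sub
    (ContDiff.sum fun ν _ => (hξ ν).mul ((hζ μ).pd ν))

theorem sum_G_mul_lieBracket_eq_zero (hPM : ∀ μ ν ρ x, P μ ν ρ x = M ν μ ρ x)
    (hDζ : ∀ μ ν x, covD G P ζ μ ν x = 0) (hDξ : ∀ μ ν x, covD G M ξ μ ν x = 0)
    (μ : Fin D) (x : Fin D → ℝ) : ∑ ν, G x μ ν * lieBracket ζ ξ x ν = 0 := by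
  simp only [lieBracket, mul_sub, sum_sub_distrib, sum_mul_sum_comm (G x μ),
    sum_G_mul_pd_eq_of_covD_eq_zero hDζ, sum_G_mul_pd_eq_of_covD_eq_zero hDξ, hPM, mul_neg,
    sum_neg_distrib, neg_sub_neg, sub_eq_zero]
  simp only [mul_comm (M _ _ μ x)]
  exact sum_mul_sum_comm _ _ _

theorem sum_conn_mul_lieBracket_eq_zero (hG : Smooth2T G) (hGsym : ∀ x μ ν, G x μ ν = G x ν μ)
    (hP : ∀ μ ν ρ, Sm (P μ ν ρ)) (hM : ∀ μ ν ρ, Sm (M μ ν ρ))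
    (hPM : ∀ μ ν ρ x, P μ ν ρ x = M ν μ ρ x)
    (hPcompat : ∀ μ ν ρ x, P μ ν ρ x + P μ ρ ν x = pd μ (fun y => G y ν ρ) x)
    (hMcompat : ∀ μ ν ρ x, M μ ν ρ x + M μ ρ ν x = pd μ (fun y => G y ν ρ) x)
    (hR : ∀ τ ν ρ μ x, linCurv M τ ν ρ μ x = linCurv P ρ μ τ ν x)
    (hζ : SmoothVF ζ) (hξ : SmoothVF ξ)
    (hDζ : ∀ μ ν x, covD G P ζ μ ν x = 0) (hDξ : ∀ μ ν x, covD G M ξ μ ν x = 0)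
    (μ ν : Fin D) (x : Fin D → ℝ) : ∑ ρ, P μ ν ρ x * lieBracket ζ ξ x ρ = 0 := by
  have hζG : ∀ ρ, ∑ τ, ζ x τ * M τ μ ρ x = -∑ σ, G x ρ σ * pd μ (fun y => ζ y σ) x := by
    intro ρ
    simp only [mul_comm (ζ x _), ← hPM, sum_G_mul_pd_eq_of_covD_eq_zero hDζ, neg_neg]
  have hξG : ∀ ρ, ∑ τ, ξ x τ * M ν τ ρ x = -∑ σ, G x ρ σ * pd ν (fun y => ξ y σ) x := by
    intro ρ
    simp only [mul_comm (ξ x _), sum_G_mul_pd_eq_of_covD_eq_zero hDξ, neg_neg]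
  simp only [lieBracket, mul_sub, sum_sub_distrib]
  rw [sum_conn_mul_sum_pd_eq_of_covD_eq_zero hG hP hζ hPcompat hDζ]
  simp only [hPM]
  rw [sum_conn_mul_sum_pd_eq_of_covD_eq_zero hG hM hξ hMcompat hDξ]
  simp only [hζG, hξG, hR, mul_neg, sum_neg_distrib]
  rw [sum_mul_sum_of_symm (hGsym x)]
  simp only [mul_comm (linCurv P _ _ _ _ _)]
  rw [sum_mul_sum_comm (ζ x)]
  ring

end LieBracket

theorem stmt12_general {D : ℕ}
    (G B : (Fin D → ℝ) → Fin D → Fin D → ℝ)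
    (hGs : Smooth2T G) (hGsym : ∀ x μ ν, G x μ ν = G x ν μ)
    (hBs : Smooth2T B) (hBanti : ∀ x μ ν, B x μ ν = -B x ν μ)
    (hnd : ∀ v : (Fin D → ℝ) → Fin D → ℝ, SmoothVF v →
      (∀ μ x, (∑ ν, G x μ ν * v x ν) = 0) →
      (∀ μ ν x, (∑ ρ, Gam G μ ν ρ x * v x ρ) = 0) →
      (∀ μ ν x, (∑ ρ, Htor B μ ν ρ x * v x ρ) = 0) →
      ∀ μ x, v x μ = 0)
    (ζ ξ : (Fin D → ℝ) → Fin D → ℝ) (hζ : SmoothVF ζ) (hξ : SmoothVF ξ)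
    (h1 : ∀ μ ν x, Dp G B ζ μ ν x = 0) (h2 : ∀ μ ν x, Dm G B ξ μ ν x = 0) :
    ∀ μ x, (∑ ν, ζ x ν * pd ν (fun y => ξ y μ) x)
      - (∑ ν, ξ x ν * pd ν (fun y => ζ y μ) x) = 0 := by
  have hPM := gamP_eq_gamM hGsym hBanti
  have hGamP : ∀ μ ν x, ∑ ρ, GamP G B μ ν ρ x * lieBracket ζ ξ x ρ = 0 :=
    sum_conn_mul_lieBracket_eq_zero hGs hGsym (sm_gamP hGs hBs) (sm_gamM hGs hBs) hPM
      (gamP_add_gamP hGsym hBanti) (gamM_add_gamM hGsym hBanti)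
      (linCurv_gamM_eq_linCurv_gamP hGs hGsym hBs hBanti) hζ hξ h1 h2
  refine hnd (lieBracket ζ ξ) (hζ.lieBracket hξ) (sum_G_mul_lieBracket_eq_zero hPM h1 h2)
    (fun μ ν x => ?_) (fun μ ν x => ?_)
  · simp only [gam_eq_gamP hGsym hBanti, div_mul_eq_mul_div, ← sum_div, add_mul, sum_add_distrib,
      hGamP, add_zero, zero_div]
  · simp only [htor_eq_gamP hGsym hBanti, sub_mul, sum_sub_distrib, hGamP, sub_self]

/-- Under the nondegeneracy assumption (iii), the Lie bracket of covariantly constant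
vector fields of opposite chirality vanishes. -/
theorem stmt12 {D : ℕ} (hD : 1 ≤ D)
    (G B : (Fin D → ℝ) → Fin D → Fin D → ℝ)
    (hGs : Smooth2T G) (hGsym : ∀ x μ ν, G x μ ν = G x ν μ)
    (hBs : Smooth2T B) (hBanti : ∀ x μ ν, B x μ ν = -B x ν μ)
    (hnd : ∀ v : (Fin D → ℝ) → Fin D → ℝ, SmoothVF v →
      (∀ μ x, (∑ ν, G x μ ν * v x ν) = 0) →
      (∀ μ ν x, (∑ ρ, Gam G μ ν ρ x * v x ρ) = 0) →
      (∀ μ ν x, (∑ ρ, Htor B μ ν ρ x * v x ρ) = 0) →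
      ∀ μ x, v x μ = 0)
    (ζ ξ : (Fin D → ℝ) → Fin D → ℝ) (hζ : SmoothVF ζ) (hξ : SmoothVF ξ)
    (h1 : ∀ μ ν x, Dp G B ζ μ ν x = 0) (h2 : ∀ μ ν x, Dm G B ξ μ ν x = 0) :
    ∀ μ x, (∑ ν, ζ x ν * pd ν (fun y => ξ y μ) x)
      - (∑ ν, ξ x ν * pd ν (fun y => ζ y μ) x) = 0 :=
  stmt12_general G B hGs hGsym hBs hBanti hnd ζ ξ hζ hξ h1 h2
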